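/- The alternating zeta value ζ*(2) = Σ_{n=1}^{∞} (−1)^{n−1}/n² = π²/12 has the convergent series representation Σ_{j=1}^{∞} (H_j² + H_j^{(2)}) / 2^{j+2} = π²/12. -/

import Mathlib

/-! `ζ*(2) = ζ(2)/2`: subtract twice the terms with even denominator. For absolutely convergent
series Euler's transform `Σ b_i = Σ_k 2^{-(k+1)} Σ_{i ≤ k} C(k,i) b_i` holds, because
`Σ_t C(t+i,i) 2^{-(t+i+1)} = 1`. For `b_i = (-1)^i/(i+1)^2` the inner sums are `H_{k+1}/(k+1)`,
so `ζ*(2) = Σ_k H_{k+1} / ((k+1) 2^{k+1})`. Writing `2^{-(k+1)} = Σ_{j ≥ k} 2^{-(j+2)}` and using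
`Σ_{k ≤ j} H_{k+1}/(k+1) = (H_{j+1}^2 + H^{(2)}_{j+1}) / 2` gives the second series. -/

/-- The `r`-order harmonic number `H r n = Σ_{m=1}^{n} 1/m^r`. -/
noncomputable def H (r n : ℕ) : ℝ :=
  ∑ m ∈ Finset.Icc 1 n, 1 / (m : ℝ) ^ r

open Finset Real

theorem HasSum.sum_antidiagonal {M : Type*} [AddCommMonoid M] [TopologicalSpace M]
    [ContinuousAdd M] [RegularSpace M] {f : ℕ × ℕ → M} {a : M} (h : HasSum f a) :
    HasSum (fun n => ∑ p ∈ antidiagonal n, f p) a :=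
  (HasAntidiagonal.sigmaAntidiagonalEquivProd.hasSum_iff.mpr h).sigma fun n =>
    (antidiagonal n).hasSum f

lemma hasSum_choose_div_two_pow (i : ℕ) :
    HasSum (fun t => ((t + i).choose i : ℝ) / 2 ^ (t + i + 1)) 1 := by
  have h := (hasSum_choose_mul_geometric_of_norm_lt_one i (r := (1 / 2 : ℝ))
    (by norm_num)).div_const (2 ^ (i + 1))
  rw [show (1 : ℝ) / (1 - 1 / 2) ^ (i + 1) / 2 ^ (i + 1) = 1 by
    rw [div_div, ← mul_pow]; norm_num] at h
  refine h.congr_fun fun t => ?_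
  rw [one_div, inv_pow]
  field_simp
  ring

theorem HasSum.euler_transform {b : ℕ → ℝ} {s : ℝ} (hb : HasSum b s) :
    HasSum (fun k => (∑ i ∈ range (k + 1), k.choose i * b i) / 2 ^ (k + 1)) s := by
  -- Summed by rows `F` gives `Σ b i`, summed along antidiagonals the transform.
  let F : ℕ × ℕ → ℝ := fun p => b p.1 * ((p.2 + p.1).choose p.1 / 2 ^ (p.2 + p.1 + 1))
  have hfiber (i : ℕ) : HasSum (fun t => F (i, t)) (b i) := by
    simpa using (hasSum_choose_div_two_pow i).mul_left (b i)
  have hF : Summable F := by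
    refine .of_abs ((summable_prod_of_nonneg fun _ => abs_nonneg _).mpr ⟨fun i => ?_, ?_⟩)
    · exact (hfiber i).summable.abs
    · refine hb.summable.abs.congr fun i => ?_
      simp only [F, abs_mul, abs_div, Nat.abs_cast, abs_pow, abs_two]
      rw [(hasSum_choose_div_two_pow i).summable.tsum_mul_left,
        (hasSum_choose_div_two_pow i).tsum_eq, mul_one]
  have hFs : HasSum F s := by
    have h := hF.hasSum
    rwa [(h.prod_fiberwise hfiber).unique hb] at h
  refine hFs.sum_antidiagonal.congr_fun fun k => ?_
  rw [Nat.sum_antidiagonal_eq_sum_range_succ_mk, sum_div]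
  refine sum_congr rfl fun i hi => ?_
  simp only [F, Nat.sub_add_cancel (Nat.lt_succ_iff.mp (mem_range.mp hi))]
  ring

theorem HasSum.sum_range_div_two_pow {a : ℕ → ℝ} {s : ℝ}
    (h : HasSum (fun k => a k / 2 ^ (k + 1)) s) :
    HasSum (fun n => (∑ k ∈ range (n + 1), a k) / 2 ^ (n + 2)) s := by
  have hg : HasSum (fun t : ℕ => (1 : ℝ) / 2 ^ (t + 1)) 1 := by
    simpa using hasSum_choose_div_two_pow 0
  have := hasSum_sum_range_mul_of_summable_norm h.summable.norm hg.summable.norm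
  rw [h.tsum_eq, hg.tsum_eq, mul_one] at this
  refine this.congr_fun fun n => ?_
  rw [sum_div]
  refine sum_congr rfl fun k hk => ?_
  rw [show n + 2 = (k + 1) + (n - k + 1) by have := mem_range.mp hk; omega, pow_add]
  ring

lemma hasSum_neg_one_pow_div_succ_sq :
    HasSum (fun n : ℕ => (-1 : ℝ) ^ n / ((n : ℝ) + 1) ^ 2) (π ^ 2 / 12) := by
  have hzeta : HasSum (fun n : ℕ => 1 / ((n : ℝ) + 1) ^ 2) (π ^ 2 / 6) := by
    simpa using (hasSum_nat_add_iff' 1).mpr hasSum_zeta_two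
  -- `(1 - (-1) ^ n) / 2` is the indicator of odd `n`.
  have hodd : HasSum (fun n : ℕ => (1 - (-1) ^ n) / 2 * (1 / ((n : ℝ) + 1) ^ 2)) (π ^ 2 / 24) := by
    rw [show π ^ 2 / 24 = 0 + π ^ 2 / 6 / 4 by ring]
    refine .even_add_odd (hasSum_zero.congr_fun fun k => by simp) <|
      (hzeta.div_const 4).congr_fun fun k => ?_
    rw [Nat.cast_succ, Nat.cast_mul, pow_succ, pow_mul, neg_one_sq, one_pow]
    field_simp
    ring
  rw [show π ^ 2 / 12 = π ^ 2 / 6 - 2 * (π ^ 2 / 24) by ring]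
  exact (hzeta.sub (hodd.mul_left 2)).congr_fun fun n => by ring

lemma H_succ (r n : ℕ) : H r (n + 1) = H r n + 1 / ((n : ℝ) + 1) ^ r := by
  rw [H, H, sum_Icc_succ_top (by omega), Nat.cast_succ]

lemma cast_choose_div_succ (n i : ℕ) :
    (n.choose i : ℝ) / (i + 1) = (n + 1).choose (i + 1) / (n + 1) := by
  rw [div_eq_div_iff (by positivity) (by positivity), mul_comm]
  exact_mod_cast Nat.add_one_mul_choose_eq n i

lemma sum_range_neg_one_pow_mul_choose_succ (n : ℕ) :
    ∑ i ∈ range (n + 1), (-1 : ℝ) ^ i * (n + 1).choose (i + 1) = 1 := by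
  have h : ∑ i ∈ range (n + 2), (-1 : ℝ) ^ i * (n + 1).choose i = 0 := by
    exact_mod_cast Int.alternating_sum_range_choose_of_ne n.succ_ne_zero
  rw [sum_range_succ'] at h
  simp only [pow_succ, mul_neg, mul_one, neg_mul, sum_neg_distrib, Nat.choose_zero_right,
    pow_zero, Nat.cast_one] at h
  linarith

lemma sum_range_neg_one_pow_mul_choose_div_succ (n : ℕ) :
    ∑ i ∈ range (n + 1), (-1 : ℝ) ^ i * n.choose i / (i + 1) = 1 / (n + 1) := by
  simp_rw [mul_div_assoc, cast_choose_div_succ, ← mul_div_assoc, ← sum_div,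
    sum_range_neg_one_pow_mul_choose_succ]

lemma sum_range_neg_one_pow_mul_choose_succ_div_succ (n : ℕ) :
    ∑ i ∈ range n, (-1 : ℝ) ^ i * n.choose (i + 1) / (i + 1) = H 1 n := by
  induction n with
  | zero => simp [H]
  | succ n ih =>
    simp_rw [Nat.choose_succ_succ', Nat.cast_add, mul_add, add_div, sum_add_distrib,
      sum_range_neg_one_pow_mul_choose_div_succ, sum_range_succ _ n, Nat.choose_succ_self, ih,
      H_succ]
    rw [Nat.cast_zero, mul_zero, zero_div, add_zero, pow_one, add_comm]

lemma sum_range_choose_mul_neg_one_pow_div_succ_sq (k : ℕ) :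
    ∑ i ∈ range (k + 1), k.choose i * ((-1 : ℝ) ^ i / (i + 1) ^ 2) = H 1 (k + 1) / (k + 1) := by
  rw [← sum_range_neg_one_pow_mul_choose_succ_div_succ, sum_div]
  refine sum_congr rfl fun i _ => ?_
  rw [mul_div_assoc, mul_div_assoc, div_right_comm, ← cast_choose_div_succ, div_div, ← sq]
  ring

lemma sum_range_H_div_succ (n : ℕ) :
    ∑ k ∈ range n, H 1 (k + 1) / (k + 1) = (H 1 n ^ 2 + H 2 n) / 2 := by
  induction n with
  | zero => simp [H]
  | succ n ih =>
    rw [sum_range_succ, ih, H_succ, H_succ]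
    field_simp
    ring

theorem stmt_18 :
    HasSum (fun n : ℕ => (-1 : ℝ) ^ n / ((n : ℝ) + 1) ^ 2) (Real.pi ^ 2 / 12) ∧
    HasSum (fun j : ℕ => ((H 1 (j + 1)) ^ 2 + H 2 (j + 1)) / 2 ^ (j + 3))
      (Real.pi ^ 2 / 12) := by
  refine ⟨hasSum_neg_one_pow_div_succ_sq, ?_⟩
  have hEuler : HasSum (fun k : ℕ => H 1 (k + 1) / (k + 1) / 2 ^ (k + 1)) (π ^ 2 / 12) := by
    simpa only [sum_range_choose_mul_neg_one_pow_div_succ_sq] using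
      hasSum_neg_one_pow_div_succ_sq.euler_transform
  refine hEuler.sum_range_div_two_pow.congr_fun fun j => ?_
  rw [sum_range_H_div_succ, div_div, pow_succ _ (j + 2)]
  ring
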